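/- (Optimal front pruning is sound.) Let ⟨v_n, v_{n-1},…,v₁⟩ be a right order and suppose there exists k < n with S(⟨v_{n-1},…,v_k, v_n, v_{k-1},…,v₁⟩) > S(⟨v_n,…,v₁⟩), i.e. moving the front node v_n to a later position strictly increases the right-order score. Then ⟨v_n,…,v₁⟩ is not an optimal right order on its node set, and hence is not the suffix of any optimal full order. -/

import Mathlib

open Finset

noncomputable def shat {V : Type*} [DecidableEq V] (σ : V → Finset V → ℝ) (v : V) (S : Finset V) : ℝ :=
  S.powerset.sup' S.powerset_nonempty (σ v)

noncomputable def scoreL {V : Type*} [DecidableEq V] (σ : V → Finset V → ℝ) : List V → Finset V → ℝ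
  | [], _ => 0
  | v :: t, D => shat σ v (t.toFinset ∪ D) + scoreL σ t D

noncomputable def sstar {V : Type*} [DecidableEq V] (σ : V → Finset V → ℝ) (A B : Finset V) : ℝ :=
  sSup ((fun l => scoreL σ l B) '' {l : List V | l.Nodup ∧ l.toFinset = A})

lemma perm_insertIdx' {α : Type*} (v : α) :
    ∀ (k : ℕ) (l : List α), k ≤ l.length → (l.insertIdx k v).Perm (v :: l)
  | 0, l, _ => by simp [List.insertIdx_zero]
  | k + 1, [], h => by simp at h
  | k + 1, a :: l, h => by
    rw [List.insertIdx_succ_cons]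
    exact ((perm_insertIdx' v k l (Nat.succ_le_succ_iff.mp h)).cons a).trans
      (List.Perm.swap v a l)

lemma scoreL_append {V : Type*} [DecidableEq V] (σ : V → Finset V → ℝ) :
    ∀ (p s : List V) (D : Finset V),
      scoreL σ (p ++ s) D = scoreL σ p (s.toFinset ∪ D) + scoreL σ s D
  | [], s, D => by simp [scoreL]
  | a :: p, s, D => by
    show shat σ a ((p ++ s).toFinset ∪ D) + scoreL σ (p ++ s) D = _
    rw [scoreL_append σ p s D, List.toFinset_append, Finset.union_assoc]
    simp only [scoreL]; ring

/-- Optimal front pruning is sound: if moving the front node of a right order to a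
later position strictly increases the score, then the right order is not optimal on
its node set and is not the suffix of any optimal full order. -/
theorem optimal_front_pruning {V : Type*} [DecidableEq V] [Fintype V]
    (σ : V → Finset V → ℝ) (v : V) (t : List V) (hnd : (v :: t).Nodup)
    (hins : ∃ k : ℕ, 1 ≤ k ∧ k ≤ t.length ∧
      scoreL σ (v :: t) ∅ < scoreL σ (t.insertIdx k v) ∅) :
    (¬ ∀ m : List V, m.Perm (v :: t) → scoreL σ m ∅ ≤ scoreL σ (v :: t) ∅) ∧
    ∀ w : List V, w.Nodup → w.toFinset = Finset.univ →
      (∀ w' : List V, w'.Nodup → w'.toFinset = Finset.univ →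
        scoreL σ w' ∅ ≤ scoreL σ w ∅) →
      ¬ ((v :: t) <:+ w) := by
  obtain ⟨k, hk1, hkl, hlt⟩ := hins
  have hperm : (t.insertIdx k v).Perm (v :: t) := perm_insertIdx' v k t hkl
  constructor
  · intro hopt
    exact absurd (hopt _ hperm) (not_le.mpr hlt)
  · intro w hw hwuniv hopt ⟨p, hp⟩
    set s' := t.insertIdx k v with hs'
    have hndw : (p ++ (v :: t)).Nodup := hp ▸ hw
    have hnd' : (p ++ s').Nodup := by
      rw [List.nodup_append] at hndw ⊢
      exact ⟨hndw.1, hperm.nodup_iff.mpr hndw.2.1,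
        fun a ha b hb => hndw.2.2 a ha b (hperm.mem_iff.mp hb)⟩
    have htf : s'.toFinset = (v :: t).toFinset := List.toFinset_eq_of_perm _ _ hperm
    have huniv' : (p ++ s').toFinset = Finset.univ := by
      rw [List.toFinset_append, htf, ← List.toFinset_append, hp, hwuniv]
    have hle := hopt (p ++ s') hnd' huniv'
    rw [← hp, scoreL_append, scoreL_append, htf] at hle
    linarith
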